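/- If A ∈ K_∞[x] is an additive polynomial with τ(A) = 1/t, then for every u ∈ F_q[t] one has e(A(u^{q+1}) − u²/t) = 1; in particular, this uses that t divides u^q − u in F_q[t] for every u ∈ F_q[t]. -/

import Mathlib

open Polynomial

noncomputable section

/-- The field `K_∞ = F_q((1/t))`, modelled as Laurent series in `X = 1/t`. -/
abbrev Kinf (Fq : Type) [Field Fq] := LaurentSeries Fq

/-- The embedding of the polynomial ring `F_q[t]` into `K_∞`, sending `t` to `X⁻¹`,
i.e. to the Laurent series with a single coefficient `1` in degree `-1`. -/
def polyToK (Fq : Type) [Field Fq] : Polynomial Fq →+* Kinf Fq :=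
  Polynomial.eval₂RingHom (HahnSeries.C : Fq →+* Kinf Fq) (HahnSeries.single (-1 : ℤ) 1)

/-- `α ∈ K_∞` is irrational if it is not a ratio `g/h` with `g, h ∈ F_q[t]`, `h ≠ 0`. -/
def IrrationalK (Fq : Type) [Field Fq] (α : Kinf Fq) : Prop :=
  ¬ ∃ g h : Polynomial Fq, h ≠ 0 ∧ α = polyToK Fq g / polyToK Fq h

/-- Equidistribution in `𝕋`, in the cylinder-set form of Carlitz's definition: for every
`M ≥ 1` and every tuple `(c_1, …, c_M)` of elements of `F_q`, the proportion of `u` with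
`ord u < N` whose value `s u` has coefficient `c_i` at `t^{-i}` for `1 ≤ i ≤ M`
(the coefficient of `t^{-i}` being the `HahnSeries` coefficient at `i`) tends to `q^{-M}`. -/
def Equidistributed (Fq : Type) [Field Fq] [Fintype Fq]
    (s : Polynomial Fq → Kinf Fq) : Prop :=
  ∀ M : ℕ, 1 ≤ M → ∀ c : Fin M → Fq,
    Filter.Tendsto
      (fun N : ℕ =>
        (Nat.card {u : Polynomial Fq //
            u.degree < (N : ℕ) ∧ ∀ i : Fin M, (s u).coeff ((i : ℤ) + 1) = c i} : ℝ)
          / (Fintype.card Fq : ℝ) ^ N)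
      Filter.atTop (nhds (((Fintype.card Fq : ℝ) ^ M)⁻¹))

/-- The finset of polynomials `u ∈ F_q[t]` with `ord u = deg u < N`. -/
def polysDegLT (Fq : Type) [Field Fq] [Fintype Fq] (N : ℕ) : Finset (Polynomial Fq) :=
  letI := Classical.decEq (Polynomial Fq)
  Finset.image
    (fun c : Fin N → Fq => ∑ i : Fin N, Polynomial.C (c i) * Polynomial.X ^ (i : ℕ))
    Finset.univ

/-- The trace map `tr : F_q → F_p`. -/
def trFq (p : ℕ) (Fq : Type) [Field Fq] [CharP Fq p] (a : Fq) : ZMod p :=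
  letI := ZMod.algebra Fq p
  Algebra.trace (ZMod p) Fq a

/-- The additive character `e : K_∞ → ℂ`, `e(α) = exp(2πi·tr(res α)/p)`, where
`res α` is the coefficient of `t^{-1}` in `α`. -/
def eChar (p : ℕ) (Fq : Type) [Field Fq] [CharP Fq p] (α : Kinf Fq) : ℂ :=
  Complex.exp (2 * Real.pi * Complex.I * ((trFq p Fq (α.coeff 1)).val : ℂ) / p)

/-- The map `ψ_l : K_∞ → K_∞`, `ψ_l(Σ_i a_i t^i) = Σ_j a_{pj+l}^{1/p} t^j`, where
`b ↦ b^{1/p} = b^{p^{m-1}}` inverts the Frobenius on `F_q` (`q = p^m`).  In terms of the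
`HahnSeries` (i.e. `X = 1/t`) coefficients, the coefficient of `ψ_l α` at `n` is
`(α.coeff (p*n - l))^(p^(m-1))`. -/
def psiL (p m : ℕ) [Fact p.Prime] (Fq : Type) [Field Fq] (l : ℤ) (α : Kinf Fq) : Kinf Fq where
  coeff := fun n => (α.coeff ((p : ℤ) * n - l)) ^ (p ^ (m - 1))
  isPWO_support' := by
    have hp : (0 : ℤ) < (p : ℤ) := by exact_mod_cast (Fact.out : p.Prime).pos
    have hsub : (Function.support fun n : ℤ =>
        (α.coeff ((p : ℤ) * n - l)) ^ (p ^ (m - 1))) ⊆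
        (fun i : ℤ => (i + l) / (p : ℤ)) '' α.support := by
      intro n hn
      have hne : α.coeff ((p : ℤ) * n - l) ≠ 0 := by
        intro h0
        apply hn
        simp only [Function.mem_support, ne_eq, not_not]
        rw [h0]
        exact zero_pow (pow_ne_zero _ (Fact.out : p.Prime).ne_zero)
      refine ⟨(p : ℤ) * n - l, hne, ?_⟩
      show ((p : ℤ) * n - l + l) / (p : ℤ) = n
      rw [sub_add_cancel, Int.mul_ediv_cancel_left _ (ne_of_gt hp)]
    exact ((α.isPWO_support).image_of_monotone
      (fun a b hab => Int.ediv_le_ediv hp (by omega))).mono hsub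

/-- The map `ψ = ψ_{p-1}` satisfying `e(α ξ^p) = e(ψ(α) ξ)`. -/
def psiK (p m : ℕ) [Fact p.Prime] (Fq : Type) [Field Fq] (α : Kinf Fq) : Kinf Fq :=
  psiL p m Fq ((p : ℤ) - 1) α

/-- A polynomial `A ∈ K_∞[x]` is additive if `A(x+y) = A(x) + A(y)` in `K_∞[x,y]`
(modelled as `K_∞[x][y]`, with `x = C X` and `y = X`). -/
def IsAdditive (Fq : Type) [Field Fq] (A : Polynomial (Kinf Fq)) : Prop :=
  A.eval₂ ((Polynomial.C).comp (Polynomial.C)) (Polynomial.C Polynomial.X + Polynomial.X) =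
    A.eval₂ ((Polynomial.C).comp (Polynomial.C)) (Polynomial.C Polynomial.X) +
      A.eval₂ ((Polynomial.C).comp (Polynomial.C)) (Polynomial.X :
        Polynomial (Polynomial (Kinf Fq)))

/-- The map `τ`: for an additive polynomial `A(x) = Σ_ν α_ν x^{p^ν}` one has
`τ(A) = Σ_ν ψ^ν(α_ν)`. -/
def tauK (p m : ℕ) [Fact p.Prime] (Fq : Type) [Field Fq] (A : Polynomial (Kinf Fq)) :
    Kinf Fq :=
  ∑ ν ∈ Finset.range (A.natDegree + 1), (psiK p m Fq)^[ν] (A.coeff (p ^ ν))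

end
section Aux

open Polynomial

set_option maxHeartbeats 1000000
set_option synthInstance.maxHeartbeats 400000

variable {Fq : Type} [Field Fq]

instance kinf_infinite : Infinite (Kinf Fq) :=
  Infinite.of_injective (fun n : ℤ => (HahnSeries.single n 1 : Kinf Fq)) (by
    intro a b h
    by_contra hab
    have := congrArg (fun x : Kinf Fq => x.coeff a) h
    simp only [HahnSeries.coeff_single_same, HahnSeries.coeff_single] at this
    rw [if_neg hab] at this
    exact one_ne_zero this)

lemma kinf_charP (p : ℕ) [CharP Fq p] : CharP (Kinf Fq) p :=
  charP_of_injective_ringHom (HahnSeries.C_injective (Γ := ℤ) (R := Fq)) p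

lemma isAdditive_comp {A : Polynomial (Kinf Fq)} (hA : IsAdditive Fq A) (b : Kinf Fq) :
    A.comp (X + C b) = A + C (A.eval b) := by
  have key : ∀ t : Polynomial (Polynomial (Kinf Fq)),
      (evalRingHom (C b)) (A.eval₂ ((C : (Kinf Fq)[X] →+* (Kinf Fq)[X][X]).comp (C : Kinf Fq →+* (Kinf Fq)[X])) t)
        = A.comp ((evalRingHom (C b)) t) := by
    intro t
    rw [hom_eval₂]
    have hcomp : ((evalRingHom (C b)).comp ((C : (Kinf Fq)[X] →+* (Kinf Fq)[X][X]).comp (C : Kinf Fq →+* (Kinf Fq)[X])))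
        = (C : Kinf Fq →+* Polynomial (Kinf Fq)) := by
      ext k; simp
    rw [hcomp]; rfl
  have h := congrArg (evalRingHom (C b)) hA
  rw [RingHom.map_add, key, key, key] at h
  simpa [comp_X, comp_C] using h

lemma eval_add_of_additive {A : Polynomial (Kinf Fq)} (hA : IsAdditive Fq A)
    (a b : Kinf Fq) : A.eval (a + b) = A.eval a + A.eval b := by
  have h := congrArg (Polynomial.eval a) (isAdditive_comp hA b)
  simpa [eval_comp, add_comm] using h

lemma coeff_zero_of_additive {A : Polynomial (Kinf Fq)} (hA : IsAdditive Fq A) :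
    A.coeff 0 = 0 := by
  have h := eval_add_of_additive hA 0 0
  rw [add_zero] at h
  rw [coeff_zero_eq_eval_zero]
  exact (left_eq_add.mp h)

lemma hasse_eq_of_additive {A : Polynomial (Kinf Fq)} (hA : IsAdditive Fq A)
    {i : ℕ} (hi : 1 ≤ i) : hasseDeriv i A = C (A.coeff i) := by
  apply Polynomial.funext
  intro b
  have h := congrArg (fun f => Polynomial.coeff f i) (isAdditive_comp hA b)
  simp only [coeff_add, coeff_C, if_neg (by omega : ¬ i = 0), add_zero] at h
  rw [← taylor_apply, taylor_coeff] at h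
  simpa using h

end Aux
section Aux2

open Polynomial

set_option maxHeartbeats 1000000
set_option synthInstance.maxHeartbeats 400000

lemma exists_choose_not_dvd {p : ℕ} (hp : p.Prime) {k : ℕ} (h2 : 2 ≤ k)
    (hk : ∀ ν : ℕ, k ≠ p ^ ν) : ∃ i, 0 < i ∧ i < k ∧ ¬ p ∣ k.choose i := by
  haveI : Fact p.Prime := ⟨hp⟩
  set s := k.factorization p with hs
  set r := k / p ^ s with hrdef
  have hk0 : k ≠ 0 := by omega
  have hdvd : p ^ s ∣ k := Nat.ordProj_dvd k p
  have hkr : p ^ s * r = k := Nat.mul_div_cancel' hdvd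
  have hpr : ¬ p ∣ r := Nat.not_dvd_ordCompl hp hk0
  have hr1 : r ≠ 1 := by
    intro h
    rw [h, mul_one] at hkr
    exact hk s hkr.symm
  have hr0 : r ≠ 0 := by
    intro h
    rw [h, mul_zero] at hkr
    exact hk0 hkr.symm
  have hr2 : 2 ≤ r := (Nat.two_le_iff r).mpr ⟨hr0, hr1⟩
  have hps : 0 < p ^ s := pow_pos hp.pos s
  refine ⟨p ^ s, hps, ?_, ?_⟩
  · have h2ps : p ^ s * 2 ≤ p ^ s * r := Nat.mul_le_mul_left _ hr2
    omega
  · intro hdvdc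
    have hchoose : ((k.choose (p ^ s) : ZMod p)) = (r : ZMod p) := by
      have h1 : ((X + 1 : (ZMod p)[X]) ^ k).coeff (p ^ s) = (k.choose (p ^ s) : ZMod p) :=
        Polynomial.coeff_X_add_one_pow _ k _
      have h2' : (X + 1 : (ZMod p)[X]) ^ k
          = ((X : (ZMod p)[X]) ^ (p ^ s) + 1) ^ r := by
        rw [← hkr, pow_mul, add_pow_char_pow, one_pow]
      have h3 : ((X : (ZMod p)[X]) ^ (p ^ s) + 1) ^ r
          = Polynomial.expand (ZMod p) (p ^ s) ((X + 1) ^ r) := by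
        simp [map_pow, map_add, Polynomial.expand_X, map_one]
      have h4 : (Polynomial.expand (ZMod p) (p ^ s) ((X + 1) ^ r)).coeff (p ^ s)
          = ((X + 1 : (ZMod p)[X]) ^ r).coeff 1 := by
        rw [Polynomial.coeff_expand hps, if_pos (dvd_refl _), Nat.div_self hps]
      rw [← h1, h2', h3, h4, Polynomial.coeff_X_add_one_pow, Nat.choose_one_right]
    rw [(ZMod.natCast_eq_zero_iff _ _).mpr hdvdc] at hchoose
    exact hpr ((ZMod.natCast_eq_zero_iff _ _).mp hchoose.symm)

variable {Fq : Type} [Field Fq]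

lemma coeff_eq_zero_of_additive {p : ℕ} [Fact p.Prime] [CharP Fq p]
    {A : Polynomial (Kinf Fq)} (hA : IsAdditive Fq A) {k : ℕ}
    (hk : ∀ ν : ℕ, k ≠ p ^ ν) : A.coeff k = 0 := by
  haveI : CharP (Kinf Fq) p := kinf_charP p
  rcases Nat.lt_or_ge k 2 with hk2 | hk2
  · interval_cases k
    · exact coeff_zero_of_additive hA
    · exact absurd (pow_zero p).symm (hk 0)
  · obtain ⟨i, hi0, hik, hnd⟩ := exists_choose_not_dvd Fact.out hk2 hk
    have h := congrArg (fun f => Polynomial.coeff f (k - i)) (hasse_eq_of_additive hA hi0)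
    simp only [hasseDeriv_coeff, coeff_C] at h
    rw [if_neg (by omega : ¬ k - i = 0)] at h
    rw [show k - i + i = k by omega] at h
    have hc : ((k.choose i : ℕ) : Kinf Fq) ≠ 0 := by
      rw [Ne, CharP.cast_eq_zero_iff (Kinf Fq) p]
      exact hnd
    exact (mul_eq_zero.mp h).resolve_left hc

lemma eval_additive_eq_sum {p : ℕ} [Fact p.Prime] [CharP Fq p]
    {A : Polynomial (Kinf Fq)} (hA : IsAdditive Fq A) (ξ : Kinf Fq) :
    A.eval ξ = ∑ ν ∈ Finset.range (A.natDegree + 1), A.coeff (p ^ ν) * ξ ^ (p ^ ν) := by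
  have hp1 : 1 < p := (Fact.out : p.Prime).one_lt
  rw [Polynomial.eval_eq_sum_range]
  set n := A.natDegree with hn
  have step1 : ∑ ν ∈ Finset.range (n + 1), A.coeff (p ^ ν) * ξ ^ (p ^ ν)
      = ∑ ν ∈ (Finset.range (n + 1)).filter (fun ν => p ^ ν ≤ n),
          A.coeff (p ^ ν) * ξ ^ (p ^ ν) := by
    refine (Finset.sum_filter_of_ne ?_).symm
    intro ν _ hne
    by_contra hgt
    apply hne
    rw [Polynomial.coeff_eq_zero_of_natDegree_lt (by omega), zero_mul]
  rw [step1]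
  refine (Finset.sum_of_injOn (fun ν => p ^ ν) ?_ ?_ ?_ ?_).symm
  · intro a _ b _ hab
    exact Nat.pow_right_injective ((Fact.out : p.Prime).two_le) hab
  · intro ν hν
    simp only [Finset.mem_coe, Finset.mem_filter, Finset.mem_range] at hν
    simp only [Finset.coe_range, Set.mem_Iio]
    omega
  · intro i hi hni
    simp only [Set.mem_image, Finset.mem_coe, Finset.mem_filter, Finset.mem_range] at hni
    have hcl : ∀ ν : ℕ, i ≠ p ^ ν := by
      intro ν hiν
      have hvlt := Nat.lt_pow_self (n := ν) hp1
      simp only [Finset.mem_range] at hi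
      exact hni ⟨ν, ⟨by omega, by omega⟩, hiν.symm⟩
    rw [coeff_eq_zero_of_additive hA hcl, zero_mul]
  · intro ν _
    rfl

end Aux2
section Aux3

open Polynomial

set_option maxHeartbeats 1000000
set_option synthInstance.maxHeartbeats 400000

lemma hahn_sum_coeff {Fq : Type} [Field Fq] {ι : Type} (s : Finset ι)
    (f : ι → Kinf Fq) (n : ℤ) :
    (∑ i ∈ s, f i).coeff n = ∑ i ∈ s, (f i).coeff n :=
  map_sum (HahnSeries.coeff.addMonoidHom n) f s

lemma psiK_coeff (p m : ℕ) [Fact p.Prime] (Fq : Type) [Field Fq] (α : Kinf Fq) (n : ℤ) :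
    (psiK p m Fq α).coeff n = (α.coeff ((p : ℤ) * n - ((p : ℤ) - 1))) ^ (p ^ (m - 1)) :=
  rfl

lemma psiK_iter_coeff (p m : ℕ) [Fact p.Prime] (Fq : Type) [Field Fq] (ν : ℕ)
    (α : Kinf Fq) (n : ℤ) :
    ((psiK p m Fq)^[ν] α).coeff n
      = (α.coeff ((p : ℤ) ^ ν * n - ((p : ℤ) ^ ν - 1))) ^ (p ^ (ν * (m - 1))) := by
  induction ν generalizing n with
  | zero => simp
  | succ ν ih =>
    rw [Function.iterate_succ_apply', psiK_coeff, ih, ← pow_mul]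
    congr 1
    · congr 1
      ring
    · rw [← pow_add]
      congr 1
      ring

lemma polyToK_monomial (Fq : Type) [Field Fq] (j : ℕ) (c : Fq) :
    polyToK Fq (Polynomial.monomial j c) = HahnSeries.single (-(j : ℤ)) c := by
  unfold polyToK
  rw [coe_eval₂RingHom, eval₂_monomial, HahnSeries.single_pow]
  rw [show (HahnSeries.C : Fq →+* Kinf Fq) c = HahnSeries.single (0 : ℤ) c from rfl]
  rw [HahnSeries.single_mul_single]
  congr 1
  · simp
  · simp

lemma polyToK_coeff_zero {Fq : Type} [Field Fq] (v : Polynomial Fq) :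
    (polyToK Fq v).coeff 0 = v.coeff 0 := by
  induction v using Polynomial.induction_on' with
  | add f g hf hg => rw [map_add, HahnSeries.coeff_add, hf, hg, Polynomial.coeff_add]
  | monomial j c =>
    rw [polyToK_monomial, HahnSeries.coeff_single, Polynomial.coeff_monomial]
    by_cases hj : j = 0 <;> simp [hj]

end Aux3
section Aux4

set_option maxHeartbeats 1000000
set_option synthInstance.maxHeartbeats 400000

variable (p : ℕ) (Fq : Type) [Field Fq]

lemma trFq_add [CharP Fq p] (a b : Fq) :
    trFq p Fq (a + b) = trFq p Fq a + trFq p Fq b := by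
  unfold trFq
  exact map_add _ a b

lemma trFq_sub [CharP Fq p] (a b : Fq) :
    trFq p Fq (a - b) = trFq p Fq a - trFq p Fq b := by
  unfold trFq
  exact map_sub _ a b

lemma trFq_sum [CharP Fq p] {ι : Type} (s : Finset ι) (f : ι → Fq) :
    trFq p Fq (∑ i ∈ s, f i) = ∑ i ∈ s, trFq p Fq (f i) := by
  unfold trFq
  exact map_sum _ f s

lemma trFq_frobenius [Fact p.Prime] [Fintype Fq] [CharP Fq p] (x : Fq) :
    trFq p Fq (x ^ p) = trFq p Fq x := by
  letI := ZMod.algebra Fq p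
  haveI : ExpChar Fq p := ExpChar.prime Fact.out
  let e : Fq ≃ₐ[ZMod p] Fq :=
    { frobeniusEquiv Fq p with
      commutes' := fun r => by
        show frobenius Fq p (algebraMap (ZMod p) Fq r) = algebraMap (ZMod p) Fq r
        rw [frobenius_def, ← map_pow, ZMod.pow_card] }
  have h := Algebra.trace_eq_of_algEquiv e x
  have he : e x = x ^ p := rfl
  rw [he] at h
  exact h

lemma trFq_pow_pow [Fact p.Prime] [Fintype Fq] [CharP Fq p] (k : ℕ) (x : Fq) :
    trFq p Fq (x ^ (p ^ k)) = trFq p Fq x := by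
  induction k with
  | zero => rw [pow_zero, pow_one]
  | succ k ih =>
    rw [pow_succ, pow_mul, trFq_frobenius, ih]

lemma trace_key (m ν : ℕ) [Fact p.Prime] (hm : m ≠ 0) [Fintype Fq] [CharP Fq p]
    (hq : Fintype.card Fq = p ^ m) (b c : Fq) :
    trFq p Fq (b ^ (p ^ (ν * (m - 1))) * c) = trFq p Fq (b * c ^ (p ^ ν)) := by
  rw [← trFq_pow_pow p Fq ν (b ^ (p ^ (ν * (m - 1))) * c)]
  congr 1
  rw [mul_pow, ← pow_mul, ← pow_add]
  have harith : ν * (m - 1) + ν = m * ν := by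
    cases m with
    | zero => exact absurd rfl hm
    | succ m => rw [Nat.succ_sub_one]; ring
  rw [harith, pow_mul, ← hq, FiniteField.pow_card_pow]

end Aux4
section Main

open Polynomial

set_option maxHeartbeats 1000000
set_option synthInstance.maxHeartbeats 400000

lemma main_char (p m : ℕ) [Fact p.Prime] (hm : m ≠ 0) (Fq : Type) [Field Fq] [Fintype Fq]
    [CharP Fq p] (hq : Fintype.card Fq = p ^ m) (A : Polynomial (Kinf Fq))
    (hA : IsAdditive Fq A) (u : Polynomial Fq) :
    trFq p Fq ((Polynomial.eval (polyToK Fq u) A).coeff 1)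
      = trFq p Fq ((tauK p m Fq A * polyToK Fq u).coeff 1) := by
  induction u using Polynomial.induction_on' with
  | add f g hf hg =>
    rw [map_add, eval_add_of_additive hA, mul_add, HahnSeries.coeff_add, HahnSeries.coeff_add,
      trFq_add, trFq_add, hf, hg]
  | monomial j c =>
    rw [polyToK_monomial, eval_additive_eq_sum (p := p) hA, hahn_sum_coeff, trFq_sum]
    unfold tauK
    rw [Finset.sum_mul, hahn_sum_coeff, trFq_sum]
    apply Finset.sum_congr rfl
    intro ν _
    have hL : (A.coeff (p ^ ν) * (HahnSeries.single (-(j : ℤ)) c) ^ (p ^ ν)).coeff 1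
        = (A.coeff (p ^ ν)).coeff (1 + (j : ℤ) * (p : ℤ) ^ ν) * c ^ (p ^ ν) := by
      rw [HahnSeries.single_pow,
        show ((p ^ ν : ℕ) • (-(j : ℤ))) = -((j : ℤ) * (p : ℤ) ^ ν) by
          rw [nsmul_eq_mul]; push_cast; ring]
      have h := HahnSeries.coeff_mul_single_add (x := A.coeff (p ^ ν)) (r := c ^ (p ^ ν))
        (a := 1 + (j : ℤ) * (p : ℤ) ^ ν) (b := -((j : ℤ) * (p : ℤ) ^ ν))
      rw [show (1 + (j : ℤ) * (p : ℤ) ^ ν) + (-((j : ℤ) * (p : ℤ) ^ ν)) = 1 by ring] at h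
      exact h
    have hR : ((psiK p m Fq)^[ν] (A.coeff (p ^ ν)) * HahnSeries.single (-(j : ℤ)) c).coeff 1
        = (A.coeff (p ^ ν)).coeff (1 + (j : ℤ) * (p : ℤ) ^ ν) ^ (p ^ (ν * (m - 1))) * c := by
      have h := HahnSeries.coeff_mul_single_add
        (x := (psiK p m Fq)^[ν] (A.coeff (p ^ ν))) (r := c)
        (a := 1 + (j : ℤ)) (b := -(j : ℤ))
      rw [show (1 + (j : ℤ)) + (-(j : ℤ)) = 1 by ring] at h
      rw [h, psiK_iter_coeff]
      congr 2
      ring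
    rw [hL, hR]
    exact (trace_key p Fq m ν hm hq _ c).symm

end Main


/-- If `A ∈ K_∞[x]` is additive with `τ(A) = 1/t` (`= X`), then
`e(A(u^{q+1}) - u²/t) = 1` for every `u ∈ F_q[t]`; in particular this uses that `t`
divides `u^q - u` in `F_q[t]` for every `u`. -/

theorem statement16 (p m : ℕ) [Fact p.Prime] (hm : m ≠ 0)
    (Fq : Type) [Field Fq] [Fintype Fq] [CharP Fq p] (hq : Fintype.card Fq = p ^ m)
    (A : Polynomial (Kinf Fq)) (hA : IsAdditive Fq A)
    (hτ : tauK p m Fq A = HahnSeries.single (1 : ℤ) 1) :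
    (∀ u : Polynomial Fq,
      eChar p Fq (A.eval (polyToK Fq u ^ (Fintype.card Fq + 1)) -
        polyToK Fq u ^ 2 * HahnSeries.single (1 : ℤ) 1) = 1) ∧
    ∀ u : Polynomial Fq, (Polynomial.X : Polynomial Fq) ∣ (u ^ Fintype.card Fq - u) := by
  constructor
  · intro u
    have key : trFq p Fq ((Polynomial.eval (polyToK Fq u ^ (Fintype.card Fq + 1)) A
        - polyToK Fq u ^ 2 * HahnSeries.single (1 : ℤ) 1).coeff 1) = 0 := by
      rw [HahnSeries.coeff_sub, trFq_sub]
      rw [← map_pow (polyToK Fq) u (Fintype.card Fq + 1)]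
      rw [main_char p m hm Fq hq A hA (u ^ (Fintype.card Fq + 1)), hτ]
      have h1 : ((HahnSeries.single (1 : ℤ) 1 : Kinf Fq)
          * polyToK Fq (u ^ (Fintype.card Fq + 1))).coeff 1
          = (u ^ (Fintype.card Fq + 1)).coeff 0 := by
        have h := HahnSeries.coeff_single_mul_add
          (x := polyToK Fq (u ^ (Fintype.card Fq + 1))) (r := (1 : Fq))
          (a := (0 : ℤ)) (b := (1 : ℤ))
        rw [zero_add, one_mul] at h
        rw [h, polyToK_coeff_zero]
      have h2 : ((polyToK Fq u ^ 2) * HahnSeries.single (1 : ℤ) 1).coeff 1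
          = (u ^ 2).coeff 0 := by
        have h := HahnSeries.coeff_mul_single_add
          (x := polyToK Fq u ^ 2) (r := (1 : Fq)) (a := (0 : ℤ)) (b := (1 : ℤ))
        rw [zero_add, mul_one] at h
        rw [h, ← map_pow (polyToK Fq) u 2, polyToK_coeff_zero]
      rw [h1, h2]
      have e1 : (u ^ (Fintype.card Fq + 1)).coeff 0 = (u ^ 2).coeff 0 := by
        rw [Polynomial.coeff_zero_eq_eval_zero, Polynomial.coeff_zero_eq_eval_zero,
          Polynomial.eval_pow, Polynomial.eval_pow, pow_succ, FiniteField.pow_card, sq]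
      rw [e1, sub_self]
    show Complex.exp _ = 1
    rw [key, ZMod.val_zero]
    norm_num
  · intro u
    rw [Polynomial.X_dvd_iff, Polynomial.coeff_sub, Polynomial.coeff_zero_eq_eval_zero,
      Polynomial.coeff_zero_eq_eval_zero, Polynomial.eval_pow, FiniteField.pow_card, sub_self]
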